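/- Let G be a finite connected simple graph not isomorphic to K2, and let H = ρ(λ(G)), whose vertices are the sibling equivalence classes of λ(G). Call a vertex of H T-tagged if it is a singleton class {v} with v adjacent in G to at least one leaf of G, and S-tagged if it is a class of size at least 2. Then: (1) if two distinct vertices of H are siblings in H, at least one of them is T-tagged; (2) every leaf of H that is neither T-tagged nor S-tagged is adjacent in H to an S-tagged vertex. -/

import Mathlib

open SimpleGraph

universe u

/-- The closed neighborhood of a vertex. -/
def closedNbhd {V : Type u} (G : SimpleGraph V) (v : V) : Set V :=
  insert v (G.neighborSet v)

/-- Two vertices are siblings if they share the same closed neighborhood. -/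
def Sibling {V : Type u} (G : SimpleGraph V) (u v : V) : Prop :=
  closedNbhd G u = closedNbhd G v

/-- A leaf is a vertex of degree one. -/
def IsLeaf {V : Type u} (G : SimpleGraph V) (v : V) : Prop :=
  Nat.card (G.neighborSet v) = 1

/-- The tuft number: the maximal number of leaves adjacent to a single vertex. -/
noncomputable def tuftNumber {V : Type u} (G : SimpleGraph V) : ℕ :=
  ⨆ v : V, Nat.card {u | IsLeaf G u ∧ G.Adj v u}

/-- The sibling number: the maximum over vertices `v` of the number of vertices sharing
the closed neighborhood of `v`, minus one. -/
noncomputable def siblingNumber {V : Type u} (G : SimpleGraph V) : ℕ :=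
  ⨆ v : V, (Nat.card {u | Sibling G u v} - 1)

/-- The complete graph on two vertices. -/
def K2 : SimpleGraph (Fin 2) := ⊤

/-- The sibling relation as a setoid. -/
def siblingSetoid {V : Type u} (G : SimpleGraph V) : Setoid V :=
  ⟨Sibling G, ⟨fun _ => rfl, fun {_ _} h => Eq.symm h, fun {_ _ _} h h' => Eq.trans h h'⟩⟩

/-- `rho G` is the quotient of `G` by the sibling relation: vertices are sibling
equivalence classes, two distinct classes being adjacent iff some pair of
representatives is adjacent. -/
def rho {V : Type u} (G : SimpleGraph V) : SimpleGraph (Quotient (siblingSetoid G)) where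
  Adj A B := A ≠ B ∧ ∃ u v : V, Quotient.mk (siblingSetoid G) u = A ∧
      Quotient.mk (siblingSetoid G) v = B ∧ G.Adj u v
  symm := by
    constructor
    rintro A B ⟨hne, u, v, hu, hv, h⟩
    exact ⟨hne.symm, v, u, hv, hu, h.symm⟩
  loopless := by
    constructor
    rintro A ⟨hne, -⟩
    exact hne rfl

/-- `lamS G S` is the induced subgraph on the complement of `S`. -/
def lamS {V : Type u} (G : SimpleGraph V) (S : Set V) : SimpleGraph ↥(Sᶜ) :=
  SimpleGraph.induce Sᶜ G

/-- `lam G` is the induced subgraph on the set of non-leaf vertices. -/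
def lam {V : Type u} (G : SimpleGraph V) : SimpleGraph ↥{v : V | ¬ IsLeaf G v} :=
  SimpleGraph.induce {v : V | ¬ IsLeaf G v} G

/-- A finite graph, bundled with its vertex type. -/
structure FinGraph : Type (u + 1) where
  V : Type u
  [finite : Finite V]
  G : SimpleGraph V

attribute [instance] FinGraph.finite

/-- One reduction step: remove all leaves, then contract each sibling class to a point. -/
def redStep (X : FinGraph.{u}) : FinGraph.{u} :=
  ⟨Quotient (siblingSetoid (lam X.G)), rho (lam X.G)⟩

/-- The reduction of a finite graph: iterate `redStep` until it stabilizes (up to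
isomorphism this happens after at most `Nat.card X.V` steps). -/
noncomputable def reduction (X : FinGraph.{u}) : FinGraph.{u} :=
  redStep^[Nat.card X.V] X

/-- `G` contains an induced cycle on `n` vertices. -/
def HasInducedCycle {V : Type u} (G : SimpleGraph V) (n : ℕ) : Prop :=
  ∃ s : Set V, Nonempty (SimpleGraph.induce s G ≃g cycleGraph n)

/-- A graph is chordal if it has no induced cycle on four or more vertices. -/
def Chordal {V : Type u} (G : SimpleGraph V) : Prop :=
  ∀ m : ℕ, 4 ≤ m → ¬ HasInducedCycle G m

/-- The setoid identifying isomorphic graphs on `Fin n` satisfying a property `P`. -/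
def graphSetoid (n : ℕ) (P : SimpleGraph (Fin n) → Prop) :
    Setoid {G : SimpleGraph (Fin n) // P G} :=
  ⟨fun G H => Nonempty (G.1 ≃g H.1),
    ⟨fun _ => ⟨Iso.refl⟩, fun ⟨e⟩ => ⟨e.symm⟩, fun ⟨e⟩ ⟨f⟩ => ⟨e.trans f⟩⟩⟩

/-- The number of isomorphism classes of graphs on `n` vertices satisfying `P`. -/
noncomputable def numClasses (n : ℕ) (P : SimpleGraph (Fin n) → Prop) : ℕ :=
  Nat.card (Quotient (graphSetoid n P))

/-- A vertex of `ρ(λ(G))` is `T`-tagged if it is a singleton sibling class `{x}` with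
`x` adjacent in `G` to at least one leaf of `G`. -/
def Ttagged {V : Type u} (G : SimpleGraph V)
    (A : Quotient (siblingSetoid (lam G))) : Prop :=
  ∃ x : ↥{v : V | ¬ IsLeaf G v}, Quotient.mk (siblingSetoid (lam G)) x = A ∧
    (∀ y : ↥{v : V | ¬ IsLeaf G v}, Quotient.mk (siblingSetoid (lam G)) y = A → y = x) ∧
    ∃ l : V, IsLeaf G l ∧ G.Adj (x : V) l

/-- A vertex of `ρ(λ(G))` is `S`-tagged if it is a sibling class of size at least two. -/
def Stagged {V : Type u} (G : SimpleGraph V)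
    (A : Quotient (siblingSetoid (lam G))) : Prop :=
  ∃ x y : ↥{v : V | ¬ IsLeaf G v}, x ≠ y ∧
    Quotient.mk (siblingSetoid (lam G)) x = A ∧
    Quotient.mk (siblingSetoid (lam G)) y = A

/-! Contracting sibling classes leaves no siblings behind: the closed neighbourhood of a class
in `ρ(G)` pulls back to the closed neighbourhood of any of its representatives in `G`. For a
leaf `{a}` of `ρ(λ(G))` without leaves of `G` next to `a`, all neighbours of `a` survive in
`λ(G)`; `a` has at least two of them, and they all lie in the unique class adjacent to `{a}`,
which is therefore `S`-tagged. -/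

section Rho

variable {V : Type u} (G : SimpleGraph V)

local notation "⟪" v "⟫ₛ" => Quotient.mk (siblingSetoid G) v

lemma mem_closedNbhd {x c : V} : c ∈ closedNbhd G x ↔ c = x ∨ G.Adj x c := by
  simp [closedNbhd]

lemma rho_mk_adj_mk_iff {u v : V} : (rho G).Adj ⟪u⟫ₛ ⟪v⟫ₛ ↔ ⟪u⟫ₛ ≠ ⟪v⟫ₛ ∧ G.Adj u v := by
  refine ⟨fun ⟨hne, u', v', hu, hv, huv⟩ => ⟨hne, ?_⟩, fun ⟨hne, h⟩ => ⟨hne, u, v, rfl, rfl, h⟩⟩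
  have hsu : Sibling G u' u := Quotient.exact hu
  have hsv : Sibling G v' v := Quotient.exact hv
  have hv'u : v' ∈ closedNbhd G u := hsu ▸ (mem_closedNbhd G).mpr (Or.inr huv)
  rcases (mem_closedNbhd G).mp hv'u with rfl | hv'u
  · exact absurd hv hne
  have huv' : u ∈ closedNbhd G v := hsv ▸ (mem_closedNbhd G).mpr (Or.inr hv'u.symm)
  rcases (mem_closedNbhd G).mp huv' with rfl | hvu
  · exact absurd rfl hne
  · exact hvu.symm

lemma mk_mem_closedNbhd_rho_iff {a c : V} :
    ⟪c⟫ₛ ∈ closedNbhd (rho G) ⟪a⟫ₛ ↔ c ∈ closedNbhd G a := by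
  rw [mem_closedNbhd (rho G), rho_mk_adj_mk_iff]
  constructor
  · rintro (hca | ⟨-, hac⟩)
    · exact (Quotient.exact hca : Sibling G c a) ▸ Set.mem_insert c _
    · exact (mem_closedNbhd G).mpr (Or.inr hac)
  · rw [mem_closedNbhd]
    rintro (rfl | hac)
    · exact Or.inl rfl
    · by_cases hca : ⟪c⟫ₛ = ⟪a⟫ₛ
      · exact Or.inl hca
      · exact Or.inr ⟨Ne.symm hca, hac⟩

theorem eq_of_sibling_rho {A B : Quotient (siblingSetoid G)} (h : Sibling (rho G) A B) :
    A = B := by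
  induction A using Quotient.inductionOn
  induction B using Quotient.inductionOn
  refine Quotient.sound (Set.ext fun c => ?_)
  rw [← mk_mem_closedNbhd_rho_iff G, ← mk_mem_closedNbhd_rho_iff G, h]

lemma rho_mk_adj_of_adj {a b : V} (hsing : ∀ y, ⟪y⟫ₛ = ⟪a⟫ₛ → y = a) (h : G.Adj a b) :
    (rho G).Adj ⟪a⟫ₛ ⟪b⟫ₛ :=
  (rho_mk_adj_mk_iff G).mpr ⟨fun hab => G.ne_of_adj h (hsing b hab.symm).symm, h⟩

end Rho

section Leaf

variable {V : Type u} {G : SimpleGraph V}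

lemma IsLeaf.eq_of_adj {v w w' : V} (hv : IsLeaf G v) (hw : G.Adj v w) (hw' : G.Adj v w') :
    w = w' :=
  congrArg Subtype.val ((Nat.card_eq_one_iff_unique.mp hv).1.elim ⟨w, hw⟩ ⟨w', hw'⟩)

lemma exists_adj_ne_of_not_isLeaf {v w : V} (hv : ¬ IsLeaf G v) (hw : G.Adj v w) :
    ∃ w', w' ≠ w ∧ G.Adj v w' := by
  by_contra! hlone
  have hnbr : ∀ x : G.neighborSet v, (x : V) = w := fun x => not_not.mp fun hx => hlone x hx x.2
  exact hv (Nat.card_eq_one_iff_unique.mpr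
    ⟨⟨fun x y => Subtype.ext ((hnbr x).trans (hnbr y).symm)⟩, ⟨⟨w, hw⟩⟩⟩)

end Leaf

lemma exists_stagged_adj_of_isLeaf {V : Type u} (G : SimpleGraph V)
    {A : Quotient (siblingSetoid (lam G))} (hleaf : IsLeaf (rho (lam G)) A)
    (hT : ¬ Ttagged G A) (hS : ¬ Stagged G A) :
    ∃ B, Stagged G B ∧ (rho (lam G)).Adj A B := by
  obtain ⟨a, rfl⟩ := Quotient.exists_rep A
  have hsing : ∀ y, Quotient.mk (siblingSetoid (lam G)) y =
      Quotient.mk (siblingSetoid (lam G)) a → y = a :=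
    fun y hy => not_not.mp fun hne => hS ⟨y, a, hne, hy, rfl⟩
  have hnoleaf : ∀ l, G.Adj (a : V) l → ¬ IsLeaf G l :=
    fun l hadj hl => hT ⟨a, rfl, hsing, l, hl, hadj⟩
  obtain ⟨⟨B, hB⟩⟩ := (Nat.card_eq_one_iff_unique.mp hleaf).2
  obtain ⟨-, u, v, hu, -, huv⟩ := hB
  have hav : G.Adj (a : V) (v : V) := hsing u hu ▸ huv
  obtain ⟨w, hwv, haw⟩ := exists_adj_ne_of_not_isLeaf a.2 hav
  let w' : ↥{v : V | ¬ IsLeaf G v} := ⟨w, hnoleaf w haw⟩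
  have hAv := rho_mk_adj_of_adj (lam G) hsing hav
  have hAw := rho_mk_adj_of_adj (lam G) (b := w') hsing haw
  exact ⟨_, ⟨v, w', fun h => hwv (congrArg Subtype.val h).symm, rfl,
    (hleaf.eq_of_adj hAv hAw).symm⟩, hAv⟩

theorem decorated_graph_conditions_general {V : Type} (G : SimpleGraph V) :
    (∀ A B : Quotient (siblingSetoid (lam G)), A ≠ B →
        Sibling (rho (lam G)) A B → Ttagged G A ∨ Ttagged G B) ∧
    (∀ A : Quotient (siblingSetoid (lam G)), IsLeaf (rho (lam G)) A →
        ¬ Ttagged G A → ¬ Stagged G A →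
        ∃ B, Stagged G B ∧ (rho (lam G)).Adj A B) :=
  ⟨fun _ _ hAB hsib => absurd (eq_of_sibling_rho _ hsib) hAB,
    fun _ => exists_stagged_adj_of_isLeaf G⟩

/-- For a connected graph `G` other than `K2` and `H = ρ(λ(G))`: (1) if two distinct
vertices of `H` are siblings in `H`, at least one of them is `T`-tagged; (2) every leaf
of `H` which is neither `T`-tagged nor `S`-tagged is adjacent in `H` to an `S`-tagged
vertex. -/
theorem decorated_graph_conditions {V : Type} [Fintype V] (G : SimpleGraph V)
    (hc : G.Connected) (hK2 : ¬ Nonempty (G ≃g K2)) :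
    (∀ A B : Quotient (siblingSetoid (lam G)), A ≠ B →
        Sibling (rho (lam G)) A B → Ttagged G A ∨ Ttagged G B) ∧
    (∀ A : Quotient (siblingSetoid (lam G)), IsLeaf (rho (lam G)) A →
        ¬ Ttagged G A → ¬ Stagged G A →
        ∃ B, Stagged G B ∧ (rho (lam G)).Adj A B) :=
  decorated_graph_conditions_general G
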